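/- Let n ≥ 1 and let x : ℝ → ℝ^N be continuous at 0, and u_0, …, u_{n-1}, y_0, …, y_{n-1} : ℝ → ℝ satisfy, for every j < n and every t ≠ 0, y_j(t) = ⟨C, A^j x(t)⟩ + Σ_{i=0}^{j} h_{j-i} · u_i(t). Suppose each u_i has one-sided limits u_i⁻ (as t → 0⁻) and u_i⁺ (as t → 0⁺), denote by y_j⁻, y_j⁺ the corresponding one-sided limits of y_j (which exist), let a : ℕ → ℝ with a_0 = 1, and set b_j = Σ_{i=0}^{j} a_i h_{j-i}. Then in ℝ[X]: Σ_{p=0}^{n-1} (Σ_{i=0}^{n-1-p} a_i X^{n-1-p-i}) y_p⁺ − Σ_{p=0}^{n-1} (Σ_{i=0}^{n-1-p} b_i X^{n-1-p-i}) u_p⁺ = Σ_{p=0}^{n-1} (Σ_{i=0}^{n-1-p} a_i X^{n-1-p-i}) y_p⁻ − Σ_{p=0}^{n-1} (Σ_{i=0}^{n-1-p} b_i X^{n-1-p-i}) u_p⁻. -/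

import Mathlib

/-!
Since the state is continuous at `0`, the jump `Δy_j = y_j⁺ - y_j⁻` of each output derivative
comes from the inputs alone: `Δy_j = Σ_{i ≤ j} h_{j-i} Δu_i`, i.e. `Δy = h * Δu` as power
series in degrees `< n`. The coefficient of `X^{n-1-m}` in the initial-condition polynomial built
from `(c, v)` is the `m`-th coefficient of the Cauchy product `c * v`, so after moving the `0⁻`
terms across, the claim reads `a * Δy = b * Δu` in degrees `< n`, which is the associativity
`a * (h * Δu) = (a * h) * Δu`.
-/

open Finset Matrix Filter Topology Polynomial

/-- The Markov parameters of the state-space representation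
`ẋ = A x + u B`, `y = ⟨C, x⟩ + D u`: `h 0 = D` and `h (k+1) = ⟨C, A^k B⟩`. -/
def markovParam {N : ℕ} (A : Matrix (Fin N) (Fin N) ℝ) (B C : Fin N → ℝ) (D : ℝ) : ℕ → ℝ
  | 0 => D
  | (k + 1) => C ⬝ᵥ (A ^ k).mulVec B

section OneSidedLimits

variable {ι : Type*} {s : Finset ι} {c : ι → ℝ}

theorem lim_eq_add_sum_mul_lim {X : Type*} [TopologicalSpace X] {l : Filter X}
    [l.NeBot] {x₀ : X} {f g : X → ℝ} {u : ι → X → ℝ} {w : ι → ℝ} {L : ℝ}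
    (hl : l ≤ 𝓝 x₀) (hf : ContinuousAt f x₀)
    (hg : g =ᶠ[l] fun t => f t + ∑ i ∈ s, c i * u i t)
    (hu : ∀ i ∈ s, Tendsto (u i) l (𝓝 (w i))) (hL : Tendsto g l (𝓝 L)) :
    L = f x₀ + ∑ i ∈ s, c i * w i :=
  tendsto_nhds_unique hL <| ((hf.tendsto.mono_left hl).add
    (tendsto_finsetSum s fun i hi => (hu i hi).const_mul (c i))).congr' hg.symm

theorem jump_eq_sum_mul_jump {f g : ℝ → ℝ} {u : ι → ℝ → ℝ} {t₀ gm gp : ℝ}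
    {um up : ι → ℝ} (hf : ContinuousAt f t₀)
    (hg : ∀ t, t ≠ t₀ → g t = f t + ∑ i ∈ s, c i * u i t)
    (hum : ∀ i ∈ s, Tendsto (u i) (𝓝[<] t₀) (𝓝 (um i)))
    (hup : ∀ i ∈ s, Tendsto (u i) (𝓝[>] t₀) (𝓝 (up i)))
    (hgm : Tendsto g (𝓝[<] t₀) (𝓝 gm)) (hgp : Tendsto g (𝓝[>] t₀) (𝓝 gp)) :
    gp - gm = ∑ i ∈ s, c i * (up i - um i) := by
  have hm := lim_eq_add_sum_mul_lim (l := 𝓝[<] t₀) nhdsWithin_le_nhds hf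
    (eventually_nhdsWithin_of_forall fun t ht => hg t (ne_of_lt ht)) hum hgm
  have hp := lim_eq_add_sum_mul_lim (l := 𝓝[>] t₀) nhdsWithin_le_nhds hf
    (eventually_nhdsWithin_of_forall fun t ht => hg t (ne_of_gt ht)) hup hgp
  simp only [hm, hp, mul_sub, sum_sub_distrib, add_sub_add_left_eq_sub]

end OneSidedLimits

theorem PowerSeries.coeff_mul_congr_right {R : Type*} [Semiring R] {φ ψ ψ' : PowerSeries R}
    {m : ℕ} (h : ∀ k ≤ m, PowerSeries.coeff k ψ = PowerSeries.coeff k ψ') :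
    PowerSeries.coeff m (φ * ψ) = PowerSeries.coeff m (φ * ψ') := by
  simp only [PowerSeries.coeff_mul]
  exact sum_congr rfl fun x hx => by rw [h x.2 (HasAntidiagonal.antidiagonal.snd_le hx)]

theorem PowerSeries.coeff_mk_mul_mk {R : Type*} [Semiring R] (f g : ℕ → R) (j : ℕ) :
    PowerSeries.coeff j (PowerSeries.mk f * PowerSeries.mk g) =
      ∑ i ∈ range (j + 1), f i * g (j - i) := by
  simp only [PowerSeries.coeff_mul, PowerSeries.coeff_mk,
    Nat.sum_antidiagonal_eq_sum_range_succ fun i k => f i * g k]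

section InitialConditionPoly

open PowerSeries (mk)

variable {R : Type*} [CommRing R]

noncomputable def initialConditionPoly (n : ℕ) (c v : ℕ → R) : R[X] :=
  ∑ p ∈ range n, (∑ i ∈ range (n - p), Polynomial.C (c i) * X ^ (n - 1 - p - i)) *
    Polynomial.C (v p)

theorem initialConditionPoly_sub (n : ℕ) (c v w : ℕ → R) :
    initialConditionPoly n c v - initialConditionPoly n c w =
      initialConditionPoly n c (v - w) := by
  simp only [initialConditionPoly, ← sum_sub_distrib, ← mul_sub, ← map_sub, Pi.sub_apply]

theorem initialConditionPoly_eq_sum_coeff_mul (n : ℕ) (c v : ℕ → R) :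
    initialConditionPoly n c v =
      ∑ m ∈ range n, Polynomial.C (PowerSeries.coeff m (mk c * mk v)) * X ^ (n - 1 - m) := by
  simp only [initialConditionPoly, PowerSeries.coeff_mul, PowerSeries.coeff_mk, map_sum,
    sum_mul, map_mul]
  rw [sum_sigma', sum_sigma']
  refine sum_nbij' (fun x => ⟨x.2 + x.1, (x.2, x.1)⟩) (fun x => ⟨x.2.2, x.2.1⟩)
    ?_ ?_ (fun _ _ => rfl) ?_ ?_
  all_goals simp only [mem_sigma, mem_range, HasAntidiagonal.mem_antidiagonal]
  · grind
  · grind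
  · grind
  · rintro ⟨p, i⟩ -
    rw [Nat.sub_sub, add_comm p i, mul_right_comm]

theorem initialConditionPoly_eq_of_mk_eq_mul {n : ℕ} {a b h v w : ℕ → R}
    (hb : mk b = mk a * mk h) (hv : ∀ j < n, v j = PowerSeries.coeff j (mk w * mk h)) :
    initialConditionPoly n a v = initialConditionPoly n b w := by
  rw [initialConditionPoly_eq_sum_coeff_mul, initialConditionPoly_eq_sum_coeff_mul, hb,
    mul_assoc, mul_comm (mk h)]
  refine sum_congr rfl fun m hm => ?_
  rw [PowerSeries.coeff_mul_congr_right fun k hk => ?_]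
  rw [PowerSeries.coeff_mk, hv k (by grind)]

end InitialConditionPoly

theorem initial_condition_polynomial_invariance_of_ssr_general {N : ℕ}
    (A : Matrix (Fin N) (Fin N) ℝ) (B C : Fin N → ℝ) (D : ℝ) (n : ℕ)
    (x : ℝ → Fin N → ℝ) (hx : ContinuousAt x 0)
    (u y : ℕ → ℝ → ℝ)
    (hy : ∀ j < n, ∀ t : ℝ, t ≠ 0 →
      y j t = C ⬝ᵥ (A ^ j).mulVec (x t) +
        ∑ i ∈ Finset.range (j + 1), markovParam A B C D (j - i) * u i t)
    (um up ym yp : ℕ → ℝ)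
    (hum : ∀ i < n, Tendsto (u i) (𝓝[<] 0) (𝓝 (um i)))
    (hup : ∀ i < n, Tendsto (u i) (𝓝[>] 0) (𝓝 (up i)))
    (hym : ∀ j < n, Tendsto (y j) (𝓝[<] 0) (𝓝 (ym j)))
    (hyp : ∀ j < n, Tendsto (y j) (𝓝[>] 0) (𝓝 (yp j)))
    (a : ℕ → ℝ) (b : ℕ → ℝ)
    (hb : ∀ j, b j = ∑ i ∈ Finset.range (j + 1), a i * markovParam A B C D (j - i)) :
    (∑ p ∈ Finset.range n,
        (∑ i ∈ Finset.range (n - p),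
          Polynomial.C (a i) * (Polynomial.X : ℝ[X]) ^ (n - 1 - p - i)) * Polynomial.C (yp p)) -
      (∑ p ∈ Finset.range n,
        (∑ i ∈ Finset.range (n - p),
          Polynomial.C (b i) * (Polynomial.X : ℝ[X]) ^ (n - 1 - p - i)) * Polynomial.C (up p)) =
    (∑ p ∈ Finset.range n,
        (∑ i ∈ Finset.range (n - p),
          Polynomial.C (a i) * (Polynomial.X : ℝ[X]) ^ (n - 1 - p - i)) * Polynomial.C (ym p)) -
      (∑ p ∈ Finset.range n,
        (∑ i ∈ Finset.range (n - p),
          Polynomial.C (b i) * (Polynomial.X : ℝ[X]) ^ (n - 1 - p - i)) * Polynomial.C (um p)) := by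
  set h := markovParam A B C D
  have hb_mk : PowerSeries.mk b = PowerSeries.mk a * PowerSeries.mk h := by
    ext j
    rw [PowerSeries.coeff_mk, hb, PowerSeries.coeff_mk_mul_mk]
  have jump : ∀ j < n,
      (yp - ym) j = PowerSeries.coeff j (PowerSeries.mk (up - um) * PowerSeries.mk h) := by
    intro j hj
    have hf : ContinuousAt (fun t => C ⬝ᵥ (A ^ j).mulVec (x t)) 0 :=
      (continuous_const.dotProduct (continuous_const.matrix_mulVec continuous_id)).continuousAt.comp
        hx
    have hlt : ∀ i ∈ range (j + 1), i < n := fun i hi => by grind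
    rw [Pi.sub_apply, jump_eq_sum_mul_jump hf (hy j hj) (fun i hi => hum i (hlt i hi))
      (fun i hi => hup i (hlt i hi)) (hym j hj) (hyp j hj), PowerSeries.coeff_mk_mul_mk]
    exact sum_congr rfl fun i _ => mul_comm _ _
  show initialConditionPoly n a yp - initialConditionPoly n b up =
    initialConditionPoly n a ym - initialConditionPoly n b um
  rw [sub_eq_sub_iff_sub_eq_sub, initialConditionPoly_sub, initialConditionPoly_sub]
  exact initialConditionPoly_eq_of_mk_eq_mul hb_mk jump

/-- Theorem 2 of the paper, from the state-space representation: with the state continuous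
at `0`, the one-sided limits of the output derivatives `y_j` at `0` (which exist) and
those of the input derivatives `u_i` yield the same initial-condition polynomial in the
Laplace-transform solution, whether previous (`0⁻`) or first (`0⁺`) conditions are used. -/
theorem initial_condition_polynomial_invariance_of_ssr {N : ℕ}
    (A : Matrix (Fin N) (Fin N) ℝ) (B C : Fin N → ℝ) (D : ℝ) (n : ℕ) (hn : 1 ≤ n)
    (x : ℝ → Fin N → ℝ) (hx : ContinuousAt x 0)
    (u y : ℕ → ℝ → ℝ)
    (hy : ∀ j < n, ∀ t : ℝ, t ≠ 0 →
      y j t = C ⬝ᵥ (A ^ j).mulVec (x t) +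
        ∑ i ∈ Finset.range (j + 1), markovParam A B C D (j - i) * u i t)
    (um up ym yp : ℕ → ℝ)
    (hum : ∀ i < n, Tendsto (u i) (𝓝[<] 0) (𝓝 (um i)))
    (hup : ∀ i < n, Tendsto (u i) (𝓝[>] 0) (𝓝 (up i)))
    (hym : ∀ j < n, Tendsto (y j) (𝓝[<] 0) (𝓝 (ym j)))
    (hyp : ∀ j < n, Tendsto (y j) (𝓝[>] 0) (𝓝 (yp j)))
    (a : ℕ → ℝ) (ha : a 0 = 1) (b : ℕ → ℝ)
    (hb : ∀ j, b j = ∑ i ∈ Finset.range (j + 1), a i * markovParam A B C D (j - i)) :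
    (∑ p ∈ Finset.range n,
        (∑ i ∈ Finset.range (n - p),
          Polynomial.C (a i) * (Polynomial.X : ℝ[X]) ^ (n - 1 - p - i)) * Polynomial.C (yp p)) -
      (∑ p ∈ Finset.range n,
        (∑ i ∈ Finset.range (n - p),
          Polynomial.C (b i) * (Polynomial.X : ℝ[X]) ^ (n - 1 - p - i)) * Polynomial.C (up p)) =
    (∑ p ∈ Finset.range n,
        (∑ i ∈ Finset.range (n - p),
          Polynomial.C (a i) * (Polynomial.X : ℝ[X]) ^ (n - 1 - p - i)) * Polynomial.C (ym p)) -
      (∑ p ∈ Finset.range n,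
        (∑ i ∈ Finset.range (n - p),
          Polynomial.C (b i) * (Polynomial.X : ℝ[X]) ^ (n - 1 - p - i)) * Polynomial.C (um p)) :=
  initial_condition_polynomial_invariance_of_ssr_general A B C D n x hx u y hy um up ym yp hum hup
    hym hyp a b hb
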